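/- Fixed-point (natural gradient) characterization of local VI optima: let q(θ;η_q) = exp(η_qᵀT(θ) − A(η_q)) be an exponential family, t_k(θ;η_k) = exp(η_kᵀT(θ)) an unnormalized approximate likelihood, and consider the local free-energy F(η_q) = A(η_q) − A(η^{(i-1)}_q) + E_{q(·;η_q)}[log p(y_k|θ)] + (η^{(i-1)}_q − η_q − η^{(i-1)}_k)ᵀ E_{q(·;η_q)}[T(θ)]. If η_q is a stationary point of F and the Fisher information matrix ∇²A(η_q) is invertible, then the natural parameter update η_k := η_q − η^{(i-1)}_q + η^{(i-1)}_k satisfies η_k = (∇²A(η_q))⁻¹ · d/dη_q E_{q(·;η_q)}[log p(y_k|θ)]. -/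

import Mathlib

open MeasureTheory

/-- fixed-point (natural gradient) characterisation of local VI
optima: at a stationary point of the local free-energy, the approximate
likelihood natural parameter update `η_k = η_q − η_q⁽ⁱ⁻¹⁾ + η_k⁽ⁱ⁻¹⁾` equals
the inverse Fisher information times the gradient of the expected
log-likelihood. -/
theorem stmt_14 {Θ : Type*} [MeasurableSpace Θ] (μ : Measure Θ) [SigmaFinite μ]
    (d : ℕ) (T : Θ → Fin d → ℝ)
    (A : (Fin d → ℝ) → ℝ)
    (hA : ∀ e, A e = Real.log (∫ θ, Real.exp (∑ i, e i * T θ i) ∂μ))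
    (hC : ContDiff ℝ 2 A)
    (q : (Fin d → ℝ) → Θ → ℝ)
    (hq : ∀ e θ, q e θ = Real.exp ((∑ i, e i * T θ i) - A e))
    (hMean : ∀ e i, fderiv ℝ A e (Pi.single i 1) = ∫ θ, q e θ * T θ i ∂μ)
    (L : Θ → ℝ) (hL : ∀ θ, 0 < L θ)
    (ℓ : (Fin d → ℝ) → ℝ)
    (hℓ : ∀ e, ℓ e = ∫ θ, q e θ * Real.log (L θ) ∂μ)
    (hℓdiff : Differentiable ℝ ℓ)
    (ηprev ηkprev ηq : Fin d → ℝ)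
    (F : (Fin d → ℝ) → ℝ)
    (hF : ∀ e, F e = A e - A ηprev + ℓ e
      + ∑ i, (ηprev i - e i - ηkprev i) * fderiv ℝ A e (Pi.single i 1))
    (hstat : ∀ j, fderiv ℝ F ηq (Pi.single j 1) = 0)
    (Minv : Matrix (Fin d) (Fin d) ℝ)
    (hMinv : ∀ i j, (∑ k, Minv i k *
        fderiv ℝ (fun e => fderiv ℝ A e (Pi.single k 1)) ηq (Pi.single j 1))
      = if i = j then (1:ℝ) else 0) :
    ∀ i, ηq i - ηprev i + ηkprev i
      = ∑ j, Minv i j * fderiv ℝ ℓ ηq (Pi.single j 1) := by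
  classical
  -- basic differentiability facts
  have hA1 : Differentiable ℝ A := hC.differentiable (by norm_num)
  have hA'C : ContDiff ℝ 1 (fderiv ℝ A) := hC.fderiv_right (by norm_num)
  have hA'1 : Differentiable ℝ (fderiv ℝ A) := hA'C.differentiable (by norm_num)
  set H2 : (Fin d → ℝ) →L[ℝ] (Fin d → ℝ) →L[ℝ] ℝ := fderiv ℝ (fderiv ℝ A) ηq with hH2
  have hD2 : HasFDerivAt (fderiv ℝ A) H2 ηq := (hA'1 ηq).hasFDerivAt
  -- symmetry of second derivative
  have hsymm : ∀ v w, H2 v w = H2 w v :=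
    second_derivative_symmetric (fun y => (hA1 y).hasFDerivAt) hD2
  -- derivative of e ↦ fderiv A e (single i 1)
  have hDi : ∀ i : Fin d, HasFDerivAt (fun e => fderiv ℝ A e (Pi.single i 1))
      ((fderiv ℝ A ηq).comp (0 : (Fin d → ℝ) →L[ℝ] (Fin d → ℝ)) + H2.flip (Pi.single i 1)) ηq :=
    fun i => hD2.clm_apply (hasFDerivAt_const _ _)
  -- abbreviation for the Hessian entries as they appear in the statement
  set H : Fin d → Fin d → ℝ := fun k j =>
    fderiv ℝ (fun e => fderiv ℝ A e (Pi.single k 1)) ηq (Pi.single j 1) with hHdef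
  have hHval : ∀ k j, H k j = H2 (Pi.single j 1) (Pi.single k 1) := by
    intro k j
    have := (hDi k).fderiv
    simp only [hHdef, this]
    simp
  -- derivative of the product terms
  have hterm : ∀ i : Fin d, HasFDerivAt
      (fun e => (ηprev i - e i - ηkprev i) * fderiv ℝ A e (Pi.single i 1))
      ((ηprev i - ηq i - ηkprev i) •
          ((fderiv ℝ A ηq).comp (0 : (Fin d → ℝ) →L[ℝ] (Fin d → ℝ)) + H2.flip (Pi.single i 1))
        + (fderiv ℝ A ηq (Pi.single i 1)) •
          ((0 : (Fin d → ℝ) →L[ℝ] ℝ) - (ContinuousLinearMap.proj i) - 0)) ηq := by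
    intro i
    have hc : HasFDerivAt (fun e : Fin d → ℝ => ηprev i - e i - ηkprev i)
        ((0 : (Fin d → ℝ) →L[ℝ] ℝ) - (ContinuousLinearMap.proj i) - 0) ηq := by
      exact (((hasFDerivAt_const (ηprev i) ηq).sub
        ((ContinuousLinearMap.proj i : (Fin d → ℝ) →L[ℝ] ℝ).hasFDerivAt)).sub
        (hasFDerivAt_const (ηkprev i) ηq))
    exact hc.mul (hDi i)
  -- derivative of F
  have hFder : HasFDerivAt F
      (fderiv ℝ A ηq + fderiv ℝ ℓ ηq + ∑ i : Fin d,
        ((ηprev i - ηq i - ηkprev i) •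
          ((fderiv ℝ A ηq).comp (0 : (Fin d → ℝ) →L[ℝ] (Fin d → ℝ)) + H2.flip (Pi.single i 1))
        + (fderiv ℝ A ηq (Pi.single i 1)) •
          ((0 : (Fin d → ℝ) →L[ℝ] ℝ) - (ContinuousLinearMap.proj i) - 0))) ηq := by
    have : F = fun e => A e - A ηprev + ℓ e
        + ∑ i, (ηprev i - e i - ηkprev i) * fderiv ℝ A e (Pi.single i 1) := funext hF
    rw [this]
    exact (((hA1 ηq).hasFDerivAt.sub_const (A ηprev)).add (hℓdiff ηq).hasFDerivAt).add
      (HasFDerivAt.fun_sum (fun i _ => hterm i))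
  -- evaluate the stationarity condition
  have key : ∀ j, fderiv ℝ ℓ ηq (Pi.single j 1)
      = ∑ k, (ηq k - ηprev k + ηkprev k) * H k j := by
    intro j
    have h0 := hstat j
    rw [hFder.fderiv] at h0
    simp only [ContinuousLinearMap.add_apply, ContinuousLinearMap.sum_apply,
      ContinuousLinearMap.smul_apply, ContinuousLinearMap.sub_apply,
      ContinuousLinearMap.neg_apply, ContinuousLinearMap.zero_apply,
      ContinuousLinearMap.comp_zero, ContinuousLinearMap.flip_apply,
      ContinuousLinearMap.proj_apply, smul_eq_mul, add_zero, zero_add,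
      zero_sub, sub_zero, mul_neg, neg_neg] at h0
    have hsum2 : ∑ x : Fin d, fderiv ℝ A ηq (Pi.single x 1) * (Pi.single j 1 : Fin d → ℝ) x
        = fderiv ℝ A ηq (Pi.single j 1) := by
      rw [Finset.sum_eq_single j]
      · simp
      · intro b _ hb; simp [Pi.single_apply, hb]
      · simp
    have hs : ∑ x : Fin d, ((ηprev x - ηq x - ηkprev x) * H2 (Pi.single j 1) (Pi.single x 1)
          - fderiv ℝ A ηq (Pi.single x 1) * (Pi.single j 1 : Fin d → ℝ) x)
        = ∑ x : Fin d, (ηprev x - ηq x - ηkprev x) * H2 (Pi.single j 1) (Pi.single x 1)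
          - fderiv ℝ A ηq (Pi.single j 1) := by
      rw [Finset.sum_sub_distrib, hsum2]
    simp only [← sub_eq_add_neg] at h0
    rw [hs] at h0
    have hneg : ∑ k : Fin d, (ηq k - ηprev k + ηkprev k) * H2 (Pi.single j 1) (Pi.single k 1)
        = -∑ x : Fin d, (ηprev x - ηq x - ηkprev x) * H2 (Pi.single j 1) (Pi.single x 1) := by
      rw [← Finset.sum_neg_distrib]
      exact Finset.sum_congr rfl fun x _ => by ring
    have h1 : fderiv ℝ ℓ ηq (Pi.single j 1)
        = ∑ k : Fin d, (ηq k - ηprev k + ηkprev k) * H2 (Pi.single j 1) (Pi.single k 1) := by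
      rw [hneg]; linarith [h0]
    rw [h1]
    exact Finset.sum_congr rfl fun k _ => by rw [hHval]
  -- combine with the inverse Fisher information
  intro i
  calc ηq i - ηprev i + ηkprev i
      = ∑ k, (ηq k - ηprev k + ηkprev k) * (if i = k then (1:ℝ) else 0) := by
        rw [Finset.sum_eq_single i] <;> simp +contextual [eq_comm]
    _ = ∑ k, (ηq k - ηprev k + ηkprev k) * ∑ j, Minv i j * H j k := by
        refine Finset.sum_congr rfl fun k _ => ?_
        rw [← hMinv i k]
    _ = ∑ k, ∑ j, (ηq k - ηprev k + ηkprev k) * (Minv i j * H j k) := by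
        refine Finset.sum_congr rfl fun k _ => Finset.mul_sum _ _ _
    _ = ∑ j, ∑ k, (ηq k - ηprev k + ηkprev k) * (Minv i j * H j k) := Finset.sum_comm
    _ = ∑ j, Minv i j * ∑ k, (ηq k - ηprev k + ηkprev k) * H j k := by
        refine Finset.sum_congr rfl fun j _ => ?_
        rw [Finset.mul_sum]
        exact Finset.sum_congr rfl fun k _ => by ring
    _ = ∑ j, Minv i j * fderiv ℝ ℓ ηq (Pi.single j 1) := by
        refine Finset.sum_congr rfl fun j _ => ?_
        rw [key j]
        congr 1
        refine Finset.sum_congr rfl fun k _ => ?_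
        rw [hHval k j, hHval j k, hsymm]
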